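/- Let P be a lattice (d,k)-polytope and let u, v be two vertices of P. If I ⊆ {1,…,d} is a set of coordinate indices with 1 ≤ |I| ≤ 2 such that u_i + v_i ≤ k for every i ∈ I, and moreover Σ_{i∈I} x_i > 0 for every point x ∈ P, then the graph distance between u and v satisfies the strict inequality d(u,v) < δ(d−|I|, k) + Σ_{i∈I} (u_i + v_i). -/

import Mathlib

/-!
Put `c = ∑ i ∈ I, x i`. It is integer-valued at lattice points and its minimum `m` over `P` is
positive. By the descent lemma of the simplex method (a vertex that does not minimise a linear
functional has a neighbour with a smaller value; the edge is found through a vertex of the vertex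
figure), `u` and `v` are joined to vertices of the face `F = {c = m}` by walks of lengths at most
`c u - m` and `c v - m`. If `|I| = 1`, the face `F` fixes one coordinate, so it is affinely a
lattice `(d-1,k)`-polytope. If `I = {i, j}`, descend once more inside `F`, along `x i` or along
`-x i`, to faces fixing both coordinates; the shorter of the two routes costs at most
`max_F x i - min_F x i ≤ m` extra steps. Either way `d(u,v) ≤ c u + c v - m + δ(d-|I|,k)`.
-/

open scoped BigOperators

/-- A lattice `(d,k)`-polytope: the convex hull in `ℝ^d` of a finite set of points
all of whose coordinates are integers between `0` and `k`. -/
def IsLatticePolytope (d k : ℕ) (P : Set (Fin d → ℝ)) : Prop :=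
  ∃ V : Finset (Fin d → ℝ),
    (∀ v ∈ V, ∀ i : Fin d, ∃ n : ℕ, n ≤ k ∧ v i = n) ∧
    P = convexHull ℝ (V : Set (Fin d → ℝ))

/-- The graph of a polytope `P`: its nodes are the vertices (extreme points) of `P`,
and `u`, `v` are adjacent when the segment `[u,v]` is a `1`-dimensional face
(an extreme subset) of `P`. -/
def polytopeGraph {d : ℕ} (P : Set (Fin d → ℝ)) : SimpleGraph (Fin d → ℝ) where
  Adj u v := u ≠ v ∧ u ∈ P.extremePoints ℝ ∧ v ∈ P.extremePoints ℝ ∧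
    IsExtreme ℝ P (segment ℝ u v)
  symm := by
    constructor
    rintro u v ⟨h1, h2, h3, h4⟩
    exact ⟨h1.symm, h3, h2, by rwa [segment_symm]⟩
  loopless := by constructor; rintro u ⟨h1, -⟩; exact h1 rfl

/-- The diameter `δ(P)` of the graph of a polytope `P`. -/
noncomputable def polyDiam {d : ℕ} (P : Set (Fin d → ℝ)) : ℕ :=
  sSup { n : ℕ | ∃ u ∈ P.extremePoints ℝ, ∃ v ∈ P.extremePoints ℝ,
    (polytopeGraph P).dist u v = n }

/-- The distance `d(u,F)` from a vertex `u` of `P` to a face `F` of `P`: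
the minimum over the vertices `v` of `F` of the graph distance `d(u,v)`. -/
noncomputable def distToFace {d : ℕ} (P : Set (Fin d → ℝ)) (u : Fin d → ℝ)
    (F : Set (Fin d → ℝ)) : ℕ :=
  sInf { n : ℕ | ∃ v ∈ F.extremePoints ℝ, (polytopeGraph P).dist u v = n }

/-- `δ(d,k)`: the largest possible diameter of the graph of a lattice `(d,k)`-polytope. -/
noncomputable def latticeDiam (d k : ℕ) : ℕ :=
  sSup { n : ℕ | ∃ P : Set (Fin d → ℝ), IsLatticePolytope d k P ∧ polyDiam P = n }

open Set Function

section ExtremePoints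

variable {E F : Type*} [AddCommGroup E] [Module ℝ E] [AddCommGroup F] [Module ℝ F]

theorem image_extremePoints_of_injective (f : E →ᵃ[ℝ] F) (hf : Injective f) (A : Set E) :
    f '' A.extremePoints ℝ = (f '' A).extremePoints ℝ := by
  ext y
  constructor
  · rintro ⟨x, hx, rfl⟩
    refine ⟨mem_image_of_mem f hx.1, ?_⟩
    rintro _ ⟨x₁, hx₁, rfl⟩ _ ⟨x₂, hx₂, rfl⟩ hseg
    rw [← image_openSegment, hf.mem_set_image] at hseg
    rw [hx.2 hx₁ hx₂ hseg]
  · rintro ⟨⟨x, hx, rfl⟩, hext⟩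
    refine ⟨x, ⟨hx, fun x₁ hx₁ x₂ hx₂ hseg => hf ?_⟩, rfl⟩
    refine hext (mem_image_of_mem f hx₁) (mem_image_of_mem f hx₂) ?_
    rw [← image_openSegment]
    exact mem_image_of_mem f hseg

theorem IsExtreme.image_of_injective {A B : Set E} (hAB : IsExtreme ℝ A B) (f : E →ᵃ[ℝ] F)
    (hf : Injective f) : IsExtreme ℝ (f '' A) (f '' B) := by
  refine ⟨image_mono hAB.subset, ?_⟩
  rintro _ ⟨x₁, hx₁, rfl⟩ _ ⟨x₂, hx₂, rfl⟩ _ ⟨x, hx, rfl⟩ hseg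
  rw [← image_openSegment, hf.mem_set_image] at hseg
  exact mem_image_of_mem f (hAB.left_mem_of_mem_openSegment hx₁ hx₂ hx hseg)

theorem right_mem_extremePoints_segment (x y : E) : y ∈ (segment ℝ x y).extremePoints ℝ := by
  rcases eq_or_ne x y with rfl | hxy
  · simp
  · rw [segment_eq_image_lineMap, ← image_extremePoints_of_injective _
      (AffineMap.lineMap_injective ℝ hxy), extremePoints_Icc zero_le_one]
    exact ⟨1, by simp, by simp⟩

theorem apply_lt_of_mem_segment {h : E →ₗ[ℝ] ℝ} {w z p : E} (hz : h z < h w)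
    (hp : p ∈ segment ℝ w z) (hpw : p ≠ w) : h p < h w := by
  rw [segment_eq_image'] at hp
  obtain ⟨θ, ⟨hθ0, -⟩, rfl⟩ := hp
  have hθ : 0 < θ := hθ0.lt_of_ne (by rintro rfl; simp at hpw)
  simpa using mul_neg_of_pos_of_neg hθ (sub_neg.2 hz)

end ExtremePoints

section RadialProjection

variable {E : Type*} [AddCommGroup E] [Module ℝ E]

/-- The point where the line through `w` and `x` meets the hyperplane `{h = β}`. -/
noncomputable def radialProj (h : E →ₗ[ℝ] ℝ) (β : ℝ) (w x : E) : E :=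
  w + ((h w - β) / (h w - h x)) • (x - w)

variable {h : E →ₗ[ℝ] ℝ} {β : ℝ} {w x : E}

theorem apply_radialProj (hx : h x ≠ h w) : h (radialProj h β w x) = β := by
  have : h w - h x ≠ 0 := sub_ne_zero.2 hx.symm
  simp only [radialProj, map_add, map_smul, map_sub, smul_eq_mul]
  field_simp
  ring

theorem radialProj_add_smul_sub {r : ℝ} (hr : r ≠ 0) :
    radialProj h β w (w + r • (x - w)) = radialProj h β w x := by
  simp only [radialProj, map_add, map_smul, map_sub, smul_eq_mul, add_sub_cancel_left, smul_smul]
  congr 2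
  rw [sub_add_cancel_left, ← mul_neg, neg_sub]
  field_simp

theorem radialProj_eq_self (hx : h x = β) (hβ : β ≠ h w) : radialProj h β w x = x := by
  have : h w - β ≠ 0 := sub_ne_zero.2 hβ.symm
  simp [radialProj, hx, div_self this]

theorem radialProj_mem_segment (hx : h x ≤ β) (hβ : β ≤ h w) (hxw : h x < h w) :
    radialProj h β w x ∈ segment ℝ w x := by
  rw [segment_eq_image']
  refine ⟨(h w - β) / (h w - h x), ⟨by apply div_nonneg <;> linarith,
    (div_le_one (by linarith)).2 (by linarith)⟩, rfl⟩

theorem radialProj_mem_openSegment {x₁ x₂ : E} (h₁ : h x₁ < h w) (h₂ : h x₂ < h w)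
    (hx : x ∈ openSegment ℝ x₁ x₂) :
    radialProj h β w x ∈ openSegment ℝ (radialProj h β w x₁) (radialProj h β w x₂) := by
  obtain ⟨a, b, ha, hb, hab, rfl⟩ := hx
  have hx : h (a • x₁ + b • x₂) = a * h x₁ + b * h x₂ := by simp
  have hD : 0 < h w - (a * h x₁ + b * h x₂) := by
    have : 0 < a * (h w - h x₁) + b * (h w - h x₂) := by
      have := mul_pos ha (sub_pos.2 h₁); have := mul_pos hb (sub_pos.2 h₂); linarith
    linear_combination this + h w * hab
  refine ⟨a * (h w - h x₁) / (h w - (a * h x₁ + b * h x₂)),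
    b * (h w - h x₂) / (h w - (a * h x₁ + b * h x₂)),
    div_pos (mul_pos ha (by linarith)) hD, div_pos (mul_pos hb (by linarith)) hD, ?_, ?_⟩
  · field_simp
    linear_combination (h w) * hab
  · simp only [radialProj, hx]
    have : h w - h x₁ ≠ 0 := by linarith
    have : h w - h x₂ ≠ 0 := by linarith
    match_scalars <;> field_simp
    linear_combination β * hab

theorem eq_add_smul_of_radialProj_eq {q : E} (hx : h x < h w) (hβ : β < h w)
    (hq : radialProj h β w x = q) : x = w + ((h w - h x) / (h w - β)) • (q - w) := by
  rw [← hq, radialProj, add_sub_cancel_left, smul_smul]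
  have : h w - h x ≠ 0 := by linarith
  have : h w - β ≠ 0 := by linarith
  have h1 : (h w - h x) / (h w - β) * ((h w - β) / (h w - h x)) = 1 := by field_simp
  rw [h1, one_smul, add_sub_cancel]

theorem radialProj_mem_segment_of_mem_segment {z p : E}
    (hz : h z < β) (hβ : β < h w) (hp : p ∈ segment ℝ w z) (hpw : p ≠ w) :
    radialProj h β w p ∈ segment ℝ w z := by
  rw [segment_eq_image'] at hp
  obtain ⟨θ, -, rfl⟩ := hp
  rw [radialProj_add_smul_sub (by rintro rfl; simp at hpw)]
  exact radialProj_mem_segment hz.le hβ.le (hz.trans hβ)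

def halfLine (w q : E) : Set E := (fun t : ℝ => w + t • (q - w)) '' Ici 0

-- Radial projection from `w` carries `P \ {w}` into `P ∩ {h = β}` and open segments to open
-- segments, so the points of `P` that project to the vertex `q` form an extreme subset.
theorem isExtreme_inter_halfLine {P : Set E} {q : E}
    (hw : w ∈ P.extremePoints ℝ) (hmax : ∀ p ∈ P, p ≠ w → h p < h w) (hβ : β < h w)
    (hproj : ∀ p ∈ P, p ≠ w → radialProj h β w p ∈ P)
    (hq : q ∈ (P ∩ {x | h x = β}).extremePoints ℝ) :
    IsExtreme ℝ P (P ∩ halfLine w q) := by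
  have mem_halfLine : ∀ p ∈ P, p ≠ w → radialProj h β w p = q → p ∈ halfLine w q :=
    fun p hp hpw hpq => ⟨_, div_nonneg (sub_nonneg.2 (hmax p hp hpw).le) (sub_nonneg.2 hβ.le),
      (eq_add_smul_of_radialProj_eq (hmax p hp hpw) hβ hpq).symm⟩
  refine ⟨inter_subset_left, ?_⟩
  rintro x₁ hx₁ x₂ hx₂ x ⟨-, t, ht, rfl⟩ hseg
  dsimp only at hseg
  refine ⟨hx₁, ?_⟩
  rcases eq_or_ne x₁ w with rfl | h₁
  · exact ⟨0, self_mem_Ici, by simp⟩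
  rcases (mem_Ici.1 ht).eq_or_lt with rfl | ht
  · rw [zero_smul, add_zero] at hseg
    exact absurd (hw.2 hx₁ hx₂ hseg) h₁
  have hxq : radialProj h β w (w + t • (q - w)) = q := by
    rw [radialProj_add_smul_sub ht.ne', radialProj_eq_self hq.1.2 hβ.ne]
  refine mem_halfLine x₁ hx₁ h₁ ?_
  rcases eq_or_ne x₂ w with rfl | h₂
  · obtain ⟨a, b, ha, -, hab, hx⟩ := hseg
    obtain rfl : b = 1 - a := by linarith
    rw [← hxq, ← hx, show a • x₁ + (1 - a) • x₂ = x₂ + a • (x₁ - x₂) by module,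
      radialProj_add_smul_sub ha.ne']
  · have hproj' : ∀ p ∈ P, p ≠ w → radialProj h β w p ∈ P ∩ {x | h x = β} :=
      fun p hp hpw => ⟨hproj p hp hpw, apply_radialProj (hmax p hp hpw).ne⟩
    have := radialProj_mem_openSegment (β := β) (hmax _ hx₁ h₁) (hmax _ hx₂ h₂) hseg
    rw [hxq] at this
    exact hq.2 (hproj' _ hx₁ h₁) (hproj' _ hx₂ h₂) this

end RadialProjection

section Polytope

variable {E : Type*} [NormedAddCommGroup E] [NormedSpace ℝ E]

def minFace (c : E →L[ℝ] ℝ) (A : Set E) : Set E := {x ∈ A | IsMinOn c A x}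

theorem isExposed_minFace (c : E →L[ℝ] ℝ) (A : Set E) : IsExposed ℝ A (minFace c A) :=
  fun _ => ⟨-c, by ext x; simp [minFace, isMinOn_iff]⟩

theorem IsCompact.exists_mem_extremePoints_minFace {A : Set E} (hA : IsCompact A)
    (hne : A.Nonempty) (c : E →L[ℝ] ℝ) : ∃ x ∈ A.extremePoints ℝ, x ∈ minFace c A := by
  obtain ⟨x₀, hx₀, hmin⟩ := hA.exists_isMinOn hne c.continuous.continuousOn
  obtain ⟨x, hx⟩ := ((isExposed_minFace c A).isCompact hA).extremePoints_nonempty ⟨x₀, hx₀, hmin⟩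
  exact ⟨x, (isExposed_minFace c A).isExtreme.extremePoints_subset_extremePoints hx, hx.1⟩

theorem IsExposed.exists_subset_eq_convexHull {V : Finset E} {F : Set E}
    (hF : IsExposed ℝ (convexHull ℝ ↑V) F) : ∃ W ⊆ V, F = convexHull ℝ ↑W := by
  classical
  have hP : IsCompact (convexHull ℝ (V : Set E)) := (V.finite_toSet.isCompact_convexHull ℝ)
  have hFc : IsCompact F := hF.isCompact hP
  have hFconv : Convex ℝ F := hF.convex (convex_convexHull ℝ _)
  refine ⟨V.filter (· ∈ F), Finset.filter_subset _ _, subset_antisymm ?_ ?_⟩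
  · have hext : F.extremePoints ℝ ⊆ (V.filter (· ∈ F) : Set E) := fun x hx => by
      simpa using ⟨extremePoints_convexHull_subset
        (hF.isExtreme.extremePoints_subset_extremePoints hx), hx.1⟩
    calc F = closure (convexHull ℝ (F.extremePoints ℝ)) :=
          (closure_convexHull_extremePoints hFc hFconv).symm
      _ ⊆ _ := closure_minimal (convexHull_mono hext)
          ((V.filter (· ∈ F)).finite_toSet.isCompact_convexHull ℝ).isClosed
  · exact convexHull_min (fun x hx => (Finset.mem_filter.1 (Finset.mem_coe.1 hx)).2) hFconv

theorem isMinOn_convexHull_iff {c : E →L[ℝ] ℝ} {s : Set E} {x : E} :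
    IsMinOn c (convexHull ℝ s) x ↔ ∀ y ∈ s, c x ≤ c y := by
  refine ⟨fun h y hy => h (subset_convexHull ℝ s hy), fun h y hy => ?_⟩
  obtain ⟨z, hz, hzy⟩ :=
    (c.toLinearMap.concaveOn convex_univ).exists_le_of_mem_convexHull (subset_univ _) hy
  exact (h z hz).trans hzy

theorem exists_mem_minFace_convexHull {V : Finset E} (hV : V.Nonempty) (c : E →L[ℝ] ℝ) :
    ∃ x ∈ V, x ∈ minFace c (convexHull ℝ ↑V) := by
  obtain ⟨x, hx, hmin⟩ := V.exists_min_image c hV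
  exact ⟨x, hx, subset_convexHull ℝ _ hx, isMinOn_convexHull_iff.2 hmin⟩

theorem exists_finset_minFace_eq_convexHull {V : Finset E} {c : E →L[ℝ] ℝ} {x₀ : E}
    (hx₀ : x₀ ∈ minFace c (convexHull ℝ ↑V)) :
    ∃ W ⊆ V, (∀ x ∈ W, c x = c x₀) ∧ minFace c (convexHull ℝ ↑V) = convexHull ℝ ↑W := by
  obtain ⟨W, hWV, hW⟩ := (isExposed_minFace c _).exists_subset_eq_convexHull
  refine ⟨W, hWV, fun x hx => ?_, hW⟩
  have hxF : x ∈ minFace c _ := hW ▸ subset_convexHull ℝ _ hx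
  exact le_antisymm (hxF.2 hx₀.1) (hx₀.2 hxF.1)

theorem exists_lt_lt_of_mem_extremePoints_convexHull {V : Finset E} {w : E}
    (hw : w ∈ (convexHull ℝ ↑V).extremePoints ℝ) :
    ∃ (h : E →L[ℝ] ℝ) (β : ℝ), β < h w ∧ ∀ z ∈ convexHull ℝ (↑V \ {w}), h z < β := by
  have hwK : w ∉ convexHull ℝ (↑V \ {w}) := fun hwK => by
    have hsub := convexHull_min (sdiff_subset_sdiff_left (subset_convexHull ℝ (V : Set E)))
      ((convex_convexHull ℝ _).mem_extremePoints_iff_convex_sdiff.1 hw).2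
    exact (hsub hwK).2 rfl
  obtain ⟨h, β, hK, hβ⟩ := geometric_hahn_banach_closed_point (convex_convexHull ℝ _)
    (V.finite_toSet.sdiff.isCompact_convexHull ℝ).isClosed hwK
  exact ⟨h, β, hβ, hK⟩

theorem exists_mem_segment_of_mem_convexHull {V : Set E} {w p : E} (hw : w ∈ V)
    (hp : p ∈ convexHull ℝ V) (hpw : p ≠ w) : ∃ z ∈ convexHull ℝ (V \ {w}), p ∈ segment ℝ w z := by
  rcases (V \ {w}).eq_empty_or_nonempty with hK | hK
  · rw [sdiff_eq_empty, subset_singleton_iff_eq] at hK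
    rcases hK with hK | hK <;> simp_all
  · rw [← insert_eq_of_mem hw, ← insert_sdiff_singleton, convexHull_insert hK] at hp
    simpa using hp

theorem exists_vertexFigure {V : Finset E} {w : E} (hw : w ∈ (convexHull ℝ ↑V).extremePoints ℝ) :
    ∃ (h : E →L[ℝ] ℝ) (β : ℝ), β < h w ∧ (∀ z ∈ V, z ≠ w → h z < β) ∧
      ∀ p ∈ convexHull ℝ ↑V, p ≠ w →
        h p < h w ∧ radialProj (h : E →ₗ[ℝ] ℝ) β w p ∈ convexHull ℝ ↑V := by
  obtain ⟨h, β, hβ, hK⟩ := exists_lt_lt_of_mem_extremePoints_convexHull hw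
  refine ⟨h, β, hβ, fun z hz hzw => hK z (subset_convexHull ℝ _ ⟨hz, hzw⟩), fun p hp hpw => ?_⟩
  obtain ⟨z, hz, hpz⟩ :=
    exists_mem_segment_of_mem_convexHull (extremePoints_convexHull_subset hw) hp hpw
  exact ⟨apply_lt_of_mem_segment (h := (h : E →ₗ[ℝ] ℝ)) ((hK z hz).trans hβ) hpz hpw,
    (convex_convexHull ℝ _).segment_subset hw.1 (convexHull_mono sdiff_subset hz)
      (radialProj_mem_segment_of_mem_segment (hK z hz) hβ hpz hpw)⟩

theorem exists_inter_halfLine_eq_segment {P : Set E} (hPc : IsCompact P) (hP : Convex ℝ P)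
    {w q : E} (hw : w ∈ P) (hq : q ∈ P) (hqw : q ≠ w) :
    ∃ z, q ∈ segment ℝ w z ∧ P ∩ halfLine w q = segment ℝ w z := by
  set f : ℝ → E := fun t => w + t • (q - w)
  have hf : Topology.IsClosedEmbedding f :=
    (Homeomorph.addLeft w).isClosedEmbedding.comp (isClosedEmbedding_smul_left (sub_ne_zero.2 hqw))
  set T := Ici 0 ∩ f ⁻¹' P
  have hT : IsCompact T := (hf.isCompact_preimage hPc).inter_left isClosed_Ici
  have h1T : (1 : ℝ) ∈ T := ⟨mem_Ici.2 zero_le_one, by simpa [f] using hq⟩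
  have hTmax := hT.sSup_mem ⟨1, h1T⟩
  have hle : ∀ t ∈ T, t ≤ sSup T := fun t ht => le_csSup hT.bddAbove ht
  have hpos : 0 < sSup T := zero_lt_one.trans_le (hle 1 h1T)
  refine ⟨f (sSup T), ?_, subset_antisymm ?_ ?_⟩
  · rw [segment_eq_image']
    refine ⟨1 / sSup T, ⟨by positivity, (div_le_one hpos).2 (hle 1 h1T)⟩, ?_⟩
    simp only [f, add_sub_cancel_left, smul_smul]
    rw [one_div_mul_cancel hpos.ne', one_smul, add_sub_cancel]
  · rintro _ ⟨hxP, t, ht, rfl⟩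
    rw [segment_eq_image']
    refine ⟨t / sSup T, ⟨div_nonneg ht hpos.le, (div_le_one hpos).2 (hle t ⟨ht, hxP⟩)⟩, ?_⟩
    simp only [f, add_sub_cancel_left, smul_smul]
    rw [div_mul_cancel₀ _ hpos.ne']
  · intro x hx
    refine ⟨hP.segment_subset hw hTmax.2 hx, ?_⟩
    rw [segment_eq_image'] at hx
    obtain ⟨θ, ⟨hθ, -⟩, rfl⟩ := hx
    exact ⟨θ * sSup T, mul_nonneg hθ hpos.le, by simp only [f, add_sub_cancel_left, smul_smul]⟩

theorem exists_isExtreme_segment_of_lt {V : Finset E} {w y : E}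
    (hw : w ∈ (convexHull ℝ ↑V).extremePoints ℝ) (c : E →L[ℝ] ℝ) (hy : y ∈ V) (hcy : c y < c w) :
    ∃ z ∈ (convexHull ℝ ↑V).extremePoints ℝ, z ≠ w ∧
      IsExtreme ℝ (convexHull ℝ ↑V) (segment ℝ w z) ∧ c z < c w := by
  set P := convexHull ℝ (V : Set E)
  have hPc : IsCompact P := V.finite_toSet.isCompact_convexHull ℝ
  obtain ⟨h, β, hβ, hV, hfig⟩ := exists_vertexFigure hw
  -- `P ∩ {h = β}` is a vertex figure at `w`; its `c`-lowest vertex `q` points along a falling edge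
  have hyw : y ≠ w := by rintro rfl; exact hcy.false
  have hyβ : h y < β := hV y hy hyw
  set y' := radialProj (h : E →ₗ[ℝ] ℝ) β w y
  have hy'Q : y' ∈ P ∩ {x | h x = β} :=
    ⟨(hfig y (subset_convexHull ℝ _ hy) hyw).2, apply_radialProj (hyβ.trans hβ).ne⟩
  have hcy' : c y' < c w := apply_lt_of_mem_segment (h := (c : E →ₗ[ℝ] ℝ)) hcy
    (radialProj_mem_segment (h := (h : E →ₗ[ℝ] ℝ)) hyβ.le hβ.le (hyβ.trans hβ))
    (fun hy'w => hβ.ne (hy'Q.2.symm.trans (congrArg h hy'w)))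
  obtain ⟨q, hq, hqmin⟩ := (hPc.inter_right (isClosed_eq h.continuous continuous_const)
    ).exists_mem_extremePoints_minFace ⟨y', hy'Q⟩ c
  have hcq : c q < c w := (hqmin.2 hy'Q).trans_lt hcy'
  obtain ⟨z, hqz, hz⟩ := exists_inter_halfLine_eq_segment hPc (convex_convexHull ℝ _) hw.1
    hq.1.1 (by rintro rfl; exact hcq.false)
  have hext : IsExtreme ℝ P (segment ℝ w z) := hz ▸ isExtreme_inter_halfLine hw
    (fun p hp hpw => (hfig p hp hpw).1) hβ (fun p hp hpw => (hfig p hp hpw).2) hq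
  have hcz : c z < c w := by
    have := (c.toLinearMap.concaveOn convex_univ).min_le_of_mem_segment
      (mem_univ w) (mem_univ z) hqz
    simp only [ContinuousLinearMap.coe_coe] at this
    rcases min_cases (c w) (c z) with ⟨h1, -⟩ | ⟨h1, -⟩ <;> linarith
  exact ⟨z, hext.extremePoints_subset_extremePoints (right_mem_extremePoints_segment w z),
    by rintro rfl; exact hcz.false, hext, hcz⟩

end Polytope

section PolytopeGraph

variable {d : ℕ}

theorem polytopeGraph_mono {P F : Set (Fin d → ℝ)} (hF : IsExtreme ℝ P F) :
    polytopeGraph F ≤ polytopeGraph P := fun _ _ ⟨hne, hx, hy, hseg⟩ =>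
  ⟨hne, hF.extremePoints_subset_extremePoints hx, hF.extremePoints_subset_extremePoints hy,
    hF.trans hseg⟩

def polytopeGraphHomImage {n : ℕ} (g : (Fin n → ℝ) →ᵃ[ℝ] (Fin d → ℝ)) (hg : Injective g)
    (P : Set (Fin n → ℝ)) : polytopeGraph P →g polytopeGraph (g '' P) where
  toFun := g
  map_rel' := fun ⟨hne, hx, hy, hseg⟩ => by
    refine ⟨hg.ne hne, ?_, ?_, ?_⟩
    · exact image_extremePoints_of_injective g hg P ▸ mem_image_of_mem g hx
    · exact image_extremePoints_of_injective g hg P ▸ mem_image_of_mem g hy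
    · exact image_segment ℝ g _ _ ▸ hseg.image_of_injective g hg

open Finset in
theorem exists_walk_to_minFace (V : Finset (Fin d → ℝ)) (c : (Fin d → ℝ) →L[ℝ] ℝ) {ε : ℝ}
    (hε : ∀ x ∈ V, ∀ y ∈ V, c x < c y → c x + ε ≤ c y) {w : Fin d → ℝ}
    (hw : w ∈ (convexHull ℝ ↑V).extremePoints ℝ) :
    ∃ w' ∈ (convexHull ℝ ↑V).extremePoints ℝ, w' ∈ minFace c (convexHull ℝ ↑V) ∧
      ∃ p : (polytopeGraph (convexHull ℝ ↑V)).Walk w w',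
        ε * p.length ≤ c w - c w' ∧ p.length ≤ #{z ∈ V | c z < c w} := by
  classical
  induction hn : #{z ∈ V | c z < c w} using Nat.strong_induction_on generalizing w with
  | _ n ih =>
  by_cases hmin : ∀ y ∈ V, c w ≤ c y
  · exact ⟨w, hw, ⟨hw.1, isMinOn_convexHull_iff.2 hmin⟩, .nil, by simp, by simp⟩
  simp only [not_forall, not_le] at hmin
  obtain ⟨y, hy, hcy⟩ := hmin
  obtain ⟨z, hz, hzw, hext, hcz⟩ := exists_isExtreme_segment_of_lt hw c hy hcy
  have hadj : (polytopeGraph (convexHull ℝ ↑V)).Adj w z := ⟨hzw.symm, hw, hz, hext⟩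
  have hwV : w ∈ V := extremePoints_convexHull_subset hw
  have hzV : z ∈ V := extremePoints_convexHull_subset hz
  have hsub : {x ∈ V | c x < c z} ⊂ {x ∈ V | c x < c w} := by
    refine (Finset.ssubset_iff_of_subset fun x hx => ?_).2 ⟨z, ?_, ?_⟩
    · rw [Finset.mem_filter] at hx ⊢
      exact ⟨hx.1, hx.2.trans hcz⟩
    · exact Finset.mem_filter.2 ⟨hzV, hcz⟩
    · simp
  have hlt : #{x ∈ V | c x < c z} < n := hn ▸ Finset.card_lt_card hsub
  obtain ⟨w', hw', hmin', p, hlen, hcard⟩ := ih _ hlt hz rfl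
  refine ⟨w', hw', hmin', .cons hadj p, ?_, ?_⟩
  · have := hε z hzV w hwV hcz
    rw [SimpleGraph.Walk.length_cons, Nat.cast_succ]
    linarith
  · rw [SimpleGraph.Walk.length_cons]
    omega

theorem exists_walk_length_le_card {V : Finset (Fin d → ℝ)} {a b : Fin d → ℝ}
    (ha : a ∈ (convexHull ℝ ↑V).extremePoints ℝ) (hb : b ∈ (convexHull ℝ ↑V).extremePoints ℝ) :
    ∃ p : (polytopeGraph (convexHull ℝ ↑V)).Walk a b, p.length ≤ V.card := by
  -- `b` is the unique minimiser of `-h` on the polytope, so descending along `-h` ends at `b`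
  obtain ⟨h, β, hβ, hV, -⟩ := exists_vertexFigure hb
  obtain ⟨b', hb', hmin, p, -, hp⟩ :=
    exists_walk_to_minFace V (-h) (ε := 0) (fun _ _ _ _ hxy => by simpa using hxy.le) ha
  obtain rfl : b' = b := by
    by_contra hne
    have := hV b' (extremePoints_convexHull_subset hb') hne
    have : (-h) b' ≤ (-h) b := hmin.2 hb.1
    simp only [neg_apply, neg_le_neg_iff] at this
    linarith
  exact ⟨p, hp.trans (Finset.card_filter_le _ _)⟩

theorem card_le_of_forall_mem_lattice {k : ℕ} {V : Finset (Fin d → ℝ)}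
    (hV : ∀ v ∈ V, ∀ i, ∃ n : ℕ, n ≤ k ∧ v i = n) : V.card ≤ (k + 1) ^ d := by
  classical
  have hsub : V ⊆ (Finset.univ : Finset (Fin d → Fin (k + 1))).image
      (fun f i => ((f i : ℕ) : ℝ)) := fun v hv => by
    choose n hn hvn using hV v hv
    exact Finset.mem_image.2 ⟨fun i => ⟨n i, Nat.lt_succ_of_le (hn i)⟩, Finset.mem_univ _,
      funext fun i => (hvn i).symm⟩
  calc V.card ≤ _ := Finset.card_le_card hsub
    _ ≤ _ := Finset.card_image_le
    _ = (k + 1) ^ d := by simp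

def WalkDiamLE (P : Set (Fin d → ℝ)) (D : ℝ) : Prop :=
  ∀ a ∈ P.extremePoints ℝ, ∀ b ∈ P.extremePoints ℝ,
    ∃ p : (polytopeGraph P).Walk a b, (p.length : ℝ) ≤ D

theorem WalkDiamLE.mono {P : Set (Fin d → ℝ)} {D D' : ℝ} (hP : WalkDiamLE P D) (hD : D ≤ D') :
    WalkDiamLE P D' := fun a ha b hb =>
  let ⟨p, hp⟩ := hP a ha b hb
  ⟨p, hp.trans hD⟩

theorem WalkDiamLE.image {n : ℕ} {P : Set (Fin n → ℝ)} {D : ℝ} (hP : WalkDiamLE P D)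
    (g : (Fin n → ℝ) →ᵃ[ℝ] (Fin d → ℝ)) (hg : Injective g) : WalkDiamLE (g '' P) D := by
  rw [WalkDiamLE, ← image_extremePoints_of_injective g hg]
  rintro _ ⟨a, ha, rfl⟩ _ ⟨b, hb, rfl⟩
  obtain ⟨p, hp⟩ := hP a ha b hb
  exact ⟨p.map (polytopeGraphHomImage g hg P),
    (congrArg Nat.cast (SimpleGraph.Walk.length_map _ p)).trans_le hp⟩

namespace IsLatticePolytope

variable {k : ℕ} {P : Set (Fin d → ℝ)}

theorem dist_le_pow (hP : IsLatticePolytope d k P) {a b : Fin d → ℝ}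
    (ha : a ∈ P.extremePoints ℝ) (hb : b ∈ P.extremePoints ℝ) :
    (polytopeGraph P).dist a b ≤ (k + 1) ^ d := by
  obtain ⟨V, hV, rfl⟩ := hP
  obtain ⟨p, hp⟩ := exists_walk_length_le_card ha hb
  exact (SimpleGraph.dist_le p).trans (hp.trans (card_le_of_forall_mem_lattice hV))

theorem polyDiam_le_pow (hP : IsLatticePolytope d k P) : polyDiam P ≤ (k + 1) ^ d :=
  csSup_le' fun _ ⟨_, ha, _, hb, hn⟩ => hn ▸ hP.dist_le_pow ha hb

theorem dist_le_latticeDiam (hP : IsLatticePolytope d k P) {a b : Fin d → ℝ}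
    (ha : a ∈ P.extremePoints ℝ) (hb : b ∈ P.extremePoints ℝ) :
    (polytopeGraph P).dist a b ≤ latticeDiam d k :=
  calc _ ≤ polyDiam P :=
        le_csSup ⟨_, fun _ ⟨_, hu, _, hv, hn⟩ => hn ▸ hP.dist_le_pow hu hv⟩ ⟨a, ha, b, hb, rfl⟩
    _ ≤ latticeDiam d k :=
        le_csSup ⟨_, fun _ ⟨_, hQ, hn⟩ => hn ▸ hQ.polyDiam_le_pow⟩ ⟨P, hP, rfl⟩

theorem walkDiamLE (hP : IsLatticePolytope d k P) : WalkDiamLE P (latticeDiam d k) := by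
  intro a ha b hb
  obtain ⟨V, -, rfl⟩ := id hP
  obtain ⟨p, -⟩ := exists_walk_length_le_card ha hb
  obtain ⟨q, hq⟩ := p.reachable.exists_walk_length_eq_dist
  exact ⟨q, by exact_mod_cast hq ▸ hP.dist_le_latticeDiam ha hb⟩

end IsLatticePolytope

noncomputable def extendAffineMap {ι η : Type*} (σ : ι → η) (ξ : η → ℝ) :
    (ι → ℝ) →ᵃ[ℝ] (η → ℝ) where
  toFun y := extend σ y ξ
  linear := ExtendByZero.linearMap ℝ σ
  map_vadd' y v := by
    show extend σ (v + y) ξ = extend σ v 0 + extend σ y ξ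
    simpa using extend_add σ v y 0 ξ

theorem walkDiamLE_convexHull_of_eqOn {k : ℕ} {W : Finset (Fin d → ℝ)}
    (hW : ∀ v ∈ W, ∀ i, ∃ n : ℕ, n ≤ k ∧ v i = n) (I : Finset (Fin d)) (ξ : Fin d → ℝ)
    (hWξ : ∀ x ∈ W, ∀ i ∈ I, x i = ξ i) :
    WalkDiamLE (convexHull ℝ (W : Set (Fin d → ℝ))) (latticeDiam (d - I.card) k) := by
  classical
  set σ := Iᶜ.orderEmbOfFin (by simp [Finset.card_compl] : Iᶜ.card = d - I.card)
  have hσ : Injective σ := σ.injective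
  have hrange : range σ = ↑Iᶜ := Finset.range_orderEmbOfFin _ _
  set g := extendAffineMap σ ξ
  have hg : Injective g := fun y₁ y₂ h => funext fun j => by
    simpa [g, extendAffineMap, hσ.extend_apply] using congrFun h (σ j)
  have hgW : ∀ x ∈ W, g (x ∘ σ) = x := fun x hx => funext fun i => by
    by_cases hi : i ∈ range σ
    · obtain ⟨j, rfl⟩ := hi
      simp [g, extendAffineMap, hσ.extend_apply]
    · have hiI : i ∈ I := by simpa [hrange] using hi
      simp [g, extendAffineMap, extend_apply' _ _ _ hi, hWξ x hx i hiI]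
  have hP' : IsLatticePolytope (d - I.card) k (convexHull ℝ ↑(W.image (· ∘ σ))) := by
    refine ⟨_, fun v hv j => ?_, rfl⟩
    obtain ⟨x, hx, rfl⟩ := Finset.mem_image.1 hv
    exact hW x hx (σ j)
  have hW' : convexHull ℝ (W : Set (Fin d → ℝ)) = g '' convexHull ℝ ↑(W.image (· ∘ σ)) := by
    rw [AffineMap.image_convexHull, Finset.coe_image, image_image, image_congr hgW, image_id']
  rw [hW']
  exact hP'.walkDiamLE.image g hg

theorem exists_walk_length_le_of_walkDiamLE_minFace {V : Finset (Fin d → ℝ)}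
    {c : (Fin d → ℝ) →L[ℝ] ℝ} (hc : ∀ x ∈ V, ∃ z : ℤ, c x = z) {D : ℝ}
    (hD : WalkDiamLE (minFace c (convexHull ℝ ↑V)) D) {x₀ : Fin d → ℝ}
    (hx₀ : x₀ ∈ minFace c (convexHull ℝ ↑V)) {a b : Fin d → ℝ}
    (ha : a ∈ (convexHull ℝ ↑V).extremePoints ℝ) (hb : b ∈ (convexHull ℝ ↑V).extremePoints ℝ) :
    ∃ p : (polytopeGraph (convexHull ℝ ↑V)).Walk a b,
      (p.length : ℝ) ≤ c a + c b - 2 * c x₀ + D := by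
  have hgap : ∀ x ∈ V, ∀ y ∈ V, c x < c y → c x + 1 ≤ c y := fun x hx y hy hxy => by
    obtain ⟨m, hm⟩ := hc x hx
    obtain ⟨n, hn⟩ := hc y hy
    rw [hm, hn] at hxy ⊢
    exact_mod_cast Int.add_one_le_of_lt (by exact_mod_cast hxy)
  have hF := (isExposed_minFace c (convexHull ℝ (V : Set (Fin d → ℝ)))).isExtreme
  obtain ⟨a', ha', ha'F, pa, hpa, -⟩ := exists_walk_to_minFace V c hgap ha
  obtain ⟨b', hb', hb'F, pb, hpb, -⟩ := exists_walk_to_minFace V c hgap hb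
  have hca : c a' = c x₀ := le_antisymm (ha'F.2 hx₀.1) (hx₀.2 ha'F.1)
  have hcb : c b' = c x₀ := le_antisymm (hb'F.2 hx₀.1) (hx₀.2 hb'F.1)
  obtain ⟨q, hq⟩ := hD a' (hF.extremePoints_eq ▸ ⟨ha'F, ha'⟩) b' (hF.extremePoints_eq ▸ ⟨hb'F, hb'⟩)
  refine ⟨pa.append ((q.mapLe (polytopeGraph_mono hF)).append pb.reverse), ?_⟩
  simp only [SimpleGraph.Walk.length_append, SimpleGraph.Walk.length_reverse,
    SimpleGraph.Walk.length_mapLe, Nat.cast_add]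
  linarith

theorem exists_walk_length_le_smul_coord {k : ℕ} {W : Finset (Fin d → ℝ)}
    (hW : ∀ v ∈ W, ∀ i, ∃ n : ℕ, n ≤ k ∧ v i = n) {i j : Fin d} (hij : i ≠ j) {m : ℝ}
    (hWm : ∀ x ∈ W, x i + x j = m) {s : ℤ} (hs : s ≠ 0) {a b : Fin d → ℝ}
    (ha : a ∈ (convexHull ℝ ↑W).extremePoints ℝ) (hb : b ∈ (convexHull ℝ ↑W).extremePoints ℝ) :
    ∃ x₀ ∈ W, ∃ p : (polytopeGraph (convexHull ℝ ↑W)).Walk a b,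
      (p.length : ℝ) ≤ s * (a i + b i - 2 * x₀ i) + latticeDiam (d - 2) k := by
  classical
  set c : (Fin d → ℝ) →L[ℝ] ℝ := (s : ℝ) • ContinuousLinearMap.proj i
  have hc : ∀ x, c x = s * x i := fun x => rfl
  have hWne : W.Nonempty := Finset.coe_nonempty.1 (convexHull_nonempty_iff.1 ⟨a, ha.1⟩)
  obtain ⟨x₀, hx₀W, hx₀⟩ := exists_mem_minFace_convexHull hWne c
  obtain ⟨W', hW'W, hW'c, hF⟩ := exists_finset_minFace_eq_convexHull hx₀
  have hfix : ∀ x ∈ W', ∀ l ∈ ({i, j} : Finset (Fin d)),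
      x l = if l = i then x₀ i else m - x₀ i := by
    intro x hx l hl
    have hxi : x i = x₀ i :=
      mul_left_cancel₀ (Int.cast_ne_zero.2 hs) (by simpa only [hc] using hW'c x hx)
    rcases Finset.mem_insert.1 hl with rfl | hl
    · simp [hxi]
    · rw [Finset.mem_singleton.1 hl, if_neg hij.symm]
      linarith [hWm x (hW'W hx)]
  have hD := walkDiamLE_convexHull_of_eqOn (fun v hv => hW v (hW'W hv)) {i, j} _ hfix
  rw [Finset.card_pair hij, ← hF] at hD
  have hint : ∀ x ∈ W, ∃ z : ℤ, c x = z := fun x hx => by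
    obtain ⟨n, -, hn⟩ := hW x hx i
    exact ⟨s * n, by rw [hc, hn]; push_cast; ring⟩
  obtain ⟨p, hp⟩ := exists_walk_length_le_of_walkDiamLE_minFace hint hD hx₀ ha hb
  exact ⟨x₀, hx₀W, p, by rw [hc, hc, hc] at hp; linarith⟩

theorem walkDiamLE_convexHull_of_add_eq {k : ℕ} {W : Finset (Fin d → ℝ)}
    (hW : ∀ v ∈ W, ∀ i, ∃ n : ℕ, n ≤ k ∧ v i = n) {i j : Fin d} (hij : i ≠ j) {m : ℝ}
    (hWm : ∀ x ∈ W, x i + x j = m) :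
    WalkDiamLE (convexHull ℝ (W : Set (Fin d → ℝ))) (latticeDiam (d - 2) k + m) := by
  intro a ha b hb
  obtain ⟨x₁, hx₁, p₁, hp₁⟩ := exists_walk_length_le_smul_coord hW hij hWm one_ne_zero ha hb
  obtain ⟨x₂, hx₂, p₂, hp₂⟩ :=
    exists_walk_length_le_smul_coord hW hij hWm (neg_ne_zero.2 one_ne_zero) ha hb
  have hbound : ∀ x ∈ W, ∀ l, 0 ≤ x l ∧ x l ≤ k := fun x hx l => by
    obtain ⟨n, hn, hxn⟩ := hW x hx l
    exact ⟨hxn ▸ n.cast_nonneg, hxn ▸ Nat.cast_le.2 hn⟩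
  -- `0 ≤ x i, x j ≤ k` and `x i + x j = m` confine `x i` to `[max 0 (m - k), min k m]`
  have hwidth : x₂ i - x₁ i ≤ m := by
    have := hWm x₁ hx₁; have := hWm x₂ hx₂
    have := hbound x₁ hx₁ i; have := hbound x₁ hx₁ j
    have := hbound x₂ hx₂ i; have := hbound x₂ hx₂ j
    rcases le_total m k with hmk | hmk <;> linarith
  push_cast at hp₁ hp₂
  rcases le_total (p₁.length : ℝ) p₂.length with h | h
  · exact ⟨p₁, by linarith⟩
  · exact ⟨p₂, by linarith⟩

theorem walkDiamLE_minFace_of_sum {k : ℕ} {V : Finset (Fin d → ℝ)}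
    (hV : ∀ v ∈ V, ∀ i, ∃ n : ℕ, n ≤ k ∧ v i = n) {I : Finset (Fin d)} (hI1 : 1 ≤ I.card)
    (hI2 : I.card ≤ 2) {c : (Fin d → ℝ) →L[ℝ] ℝ} (hc : ∀ x, c x = ∑ i ∈ I, x i) {x₀ : Fin d → ℝ}
    (hx₀ : x₀ ∈ minFace c (convexHull ℝ ↑V)) (hm : 0 ≤ c x₀) :
    WalkDiamLE (minFace c (convexHull ℝ ↑V)) (latticeDiam (d - I.card) k + c x₀) := by
  obtain ⟨W, hWV, hWc, hF⟩ := exists_finset_minFace_eq_convexHull hx₀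
  have hW : ∀ w ∈ W, ∀ i, ∃ n : ℕ, n ≤ k ∧ w i = n := fun w hw => hV w (hWV hw)
  rw [hF]
  rcases (by omega : I.card = 1 ∨ I.card = 2) with h1 | h2
  · obtain ⟨i, rfl⟩ := Finset.card_eq_one.1 h1
    refine (walkDiamLE_convexHull_of_eqOn hW {i} (fun _ => c x₀) fun x hx l hl => ?_).mono
      (by linarith)
    rw [Finset.mem_singleton.1 hl, ← hWc x hx, hc, Finset.sum_singleton]
  · obtain ⟨i, j, hij, rfl⟩ := Finset.card_eq_two.1 h2
    rw [h2]
    exact walkDiamLE_convexHull_of_add_eq hW hij fun x hx => by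
      rw [← Finset.sum_pair hij, ← hc, hWc x hx]

end PolytopeGraph

theorem dist_lt_of_small_sum_general (d k : ℕ) (P : Set (Fin d → ℝ)) (hP : IsLatticePolytope d k P)
    (u v : Fin d → ℝ) (hu : u ∈ P.extremePoints ℝ) (hv : v ∈ P.extremePoints ℝ)
    (I : Finset (Fin d)) (hI1 : 1 ≤ I.card) (hI2 : I.card ≤ 2)
    (hpos : ∀ x ∈ P, 0 < ∑ i ∈ I, x i) :
    ((polytopeGraph P).dist u v : ℝ) <
      (latticeDiam (d - I.card) k : ℝ) + ∑ i ∈ I, (u i + v i) := by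
  obtain ⟨V, hV, rfl⟩ := hP
  set c : (Fin d → ℝ) →L[ℝ] ℝ := ∑ i ∈ I, ContinuousLinearMap.proj i
  have hc : ∀ x, c x = ∑ i ∈ I, x i := fun x => by simp [c]
  have hint : ∀ x ∈ V, ∃ z : ℤ, c x = z := fun x hx => by
    choose n _ hn using hV x hx
    exact ⟨∑ i ∈ I, (n i : ℤ), by simp [hc, hn]⟩
  obtain ⟨x₀, -, hx₀⟩ := exists_mem_minFace_convexHull ⟨u, extremePoints_convexHull_subset hu⟩ c
  have hm : 0 < c x₀ := hc x₀ ▸ hpos x₀ hx₀.1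
  obtain ⟨p, hp⟩ := exists_walk_length_le_of_walkDiamLE_minFace hint
    (walkDiamLE_minFace_of_sum hV hI1 hI2 hc hx₀ hm.le) hx₀ hu hv
  calc ((polytopeGraph _).dist u v : ℝ) ≤ p.length := by exact_mod_cast SimpleGraph.dist_le p
    _ ≤ c u + c v - 2 * c x₀ + (latticeDiam (d - I.card) k + c x₀) := hp
    _ < _ := by rw [hc, hc, Finset.sum_add_distrib]; linarith

/-- If `u`, `v` are vertices of a lattice `(d,k)`-polytope `P`, `I` is a set of one or
two coordinate indices with `u i + v i ≤ k` for every `i ∈ I`, and `∑_{i ∈ I} x i > 0`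
for every `x ∈ P`, then `d(u,v) < δ(d−|I|,k) + ∑_{i ∈ I} (u i + v i)`. -/
theorem dist_lt_of_small_sum (d k : ℕ) (P : Set (Fin d → ℝ)) (hP : IsLatticePolytope d k P)
    (u v : Fin d → ℝ) (hu : u ∈ P.extremePoints ℝ) (hv : v ∈ P.extremePoints ℝ)
    (I : Finset (Fin d)) (hI1 : 1 ≤ I.card) (hI2 : I.card ≤ 2)
    (hsum : ∀ i ∈ I, u i + v i ≤ (k : ℝ))
    (hpos : ∀ x ∈ P, 0 < ∑ i ∈ I, x i) :
    ((polytopeGraph P).dist u v : ℝ) <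
      (latticeDiam (d - I.card) k : ℝ) + ∑ i ∈ I, (u i + v i) :=
  dist_lt_of_small_sum_general d k P hP u v hu hv I hI1 hI2 hpos
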